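/- arXiv:1005.0405 — 3 statements merged into one kernel-verified Lean document; each statement's English description precedes it below -/
import Mathlib

section
/- For every q ∈ ℕ, the sum Σ₁^κ(q) := Σ_{q₁+⋯+q_κ = q, q_i ≥ 0} 1/(1^{q₁}·2^{q₂}⋯κ^{q_κ}) satisfies Σ₁^κ(q) = (log κ)^q / q! + O((log κ)^{q-1}) as κ → ∞; more precisely there is a constant C (depending on q) such that |Σ₁^κ(q) − (log κ)^q/q!| ≤ C·(log κ)^{q-1} for all κ ≥ 2. -/
/-!
With `x i = 1 / (i + 1)` the sum is `h_q(x)`, the complete homogeneous symmetric polynomial of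
degree `q` evaluated at `x`, and `p = ∑ x i` is the harmonic number `H_κ ∈ [log κ, log κ + 1]`.
By the multinomial theorem `p ^ q = ∑ multinomial(k) x ^ k`, where `multinomial(k) ≤ q!` with
equality when no exponent exceeds `1`. Exponent vectors with some entry `≥ 2` are of the form
`k' + 2 eᵢ`, so `p ^ q ≤ q! h_q(x) ≤ p ^ q + q! (∑ x i ^ 2) h_{q-2}(x)`, and
`∑ x i ^ 2 ≤ 2`, `h_{q-2}(x) ≤ p ^ (q - 2)`. Hence `h_q(x) = p ^ q / q! + O(p ^ (q - 2))`, while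
`p ^ q - (log κ) ^ q = O(p ^ (q - 1))` because `p - log κ ≤ 1`.
-/

open Finset Nat

theorem Nat.multinomial_eq_factorial_of_le_one {α : Type*} {s : Finset α} {f : α → ℕ}
    (hf : ∀ i ∈ s, f i ≤ 1) : multinomial s f = (∑ i ∈ s, f i)! := by
  rw [← multinomial_spec, prod_eq_one fun i hi => ?_, one_mul]
  obtain h | h := Nat.le_one_iff_eq_zero_or_eq_one.mp (hf i hi) <;> simp [h]

theorem Nat.multinomial_le_factorial {α : Type*} (s : Finset α) (f : α → ℕ) :
    multinomial s f ≤ (∑ i ∈ s, f i)! := by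
  rw [← multinomial_spec]
  exact Nat.le_mul_of_pos_left _ (prod_pos fun i _ => (f i).factorial_pos)

theorem Fintype.prod_pow_add_single {ι M : Type*} [Fintype ι] [DecidableEq ι] [CommMonoid M]
    (x : ι → M) (k : ι → ℕ) (i : ι) (n : ℕ) :
    ∏ j, x j ^ (k j + (Pi.single i n : ι → ℕ) j) = x i ^ n * ∏ j, x j ^ k j := by
  simp_rw [pow_add, prod_mul_distrib]
  rw [mul_comm, Fintype.prod_eq_single i fun j hj => by simp [hj]]
  simp

theorem Fintype.filter_piFinset_range_sum_eq_piAntidiag {ι : Type*} [Fintype ι] [DecidableEq ι]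
    (n : ℕ) :
    {f ∈ Fintype.piFinset fun _ : ι => range (n + 1) | ∑ i, f i = n} = piAntidiag univ n := by
  ext f
  simp only [mem_filter, Fintype.mem_piFinset, mem_range, Nat.lt_succ_iff, mem_piAntidiag,
    mem_univ, implies_true, and_true, and_iff_right_iff_imp]
  rintro rfl i
  exact single_le_sum (fun j _ => Nat.zero_le (f j)) (mem_univ i)

section CompleteHomogeneous

variable {ι R : Type*} [Fintype ι] [DecidableEq ι] [CommSemiring R] [PartialOrder R]
  [IsOrderedRing R]

def completeHomogeneous (x : ι → R) (r : ℕ) : R :=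
  ∑ k ∈ piAntidiag univ r, ∏ i, x i ^ k i

variable {x : ι → R}

omit [DecidableEq ι] in
theorem prod_pow_nonneg (hx : ∀ i, 0 ≤ x i) (k : ι → ℕ) : 0 ≤ ∏ i, x i ^ k i :=
  prod_nonneg fun i _ => pow_nonneg (hx i) _

theorem completeHomogeneous_nonneg (hx : ∀ i, 0 ≤ x i) (r : ℕ) :
    0 ≤ completeHomogeneous x r :=
  sum_nonneg fun k _ => prod_pow_nonneg hx k

theorem completeHomogeneous_le_sum_pow (hx : ∀ i, 0 ≤ x i) (r : ℕ) :
    completeHomogeneous x r ≤ (∑ i, x i) ^ r := by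
  rw [sum_pow_eq_sum_piAntidiag]
  refine sum_le_sum fun k _ => le_mul_of_one_le_left (prod_pow_nonneg hx k) ?_
  exact_mod_cast Nat.mono_cast (α := R) (multinomial_pos univ k)

theorem sum_pow_le_factorial_mul_completeHomogeneous (hx : ∀ i, 0 ≤ x i) (r : ℕ) :
    (∑ i, x i) ^ r ≤ r ! * completeHomogeneous x r := by
  rw [sum_pow_eq_sum_piAntidiag, completeHomogeneous, mul_sum]
  refine sum_le_sum fun k hk => mul_le_mul_of_nonneg_right ?_ (prod_pow_nonneg hx k)
  rw [← (mem_piAntidiag.mp hk).1]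
  exact_mod_cast Nat.mono_cast (α := R) (multinomial_le_factorial univ k)

theorem sum_filter_exists_two_le_le (hx : ∀ i, 0 ≤ x i) (r : ℕ) :
    ∑ k ∈ piAntidiag univ r with ∃ i, 2 ≤ k i, ∏ i, x i ^ k i
      ≤ (∑ i, x i ^ 2) * completeHomogeneous x (r - 2) := by
  have hcover : {k ∈ piAntidiag (univ : Finset ι) r | ∃ i, 2 ≤ k i} ⊆
      ((univ : Finset ι) ×ˢ piAntidiag univ (r - 2)).image
        fun p : ι × (ι → ℕ) => p.2 + Pi.single p.1 2 := by
    intro k hk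
    obtain ⟨hk, i, hi⟩ := mem_filter.mp hk
    have hsingle : Pi.single i 2 ≤ k := fun j => by
      by_cases h : j = i
      · subst h; simpa
      · simp [h]
    refine mem_image.mpr ⟨(i, k - Pi.single i 2), ?_, tsub_add_cancel_of_le hsingle⟩
    have hsum := (mem_piAntidiag.mp hk).1
    rw [← tsub_add_cancel_of_le hsingle] at hsum
    simp only [Pi.add_apply, sum_add_distrib, Fintype.sum_pi_single'] at hsum
    simp only [mem_product, mem_univ, mem_piAntidiag, true_and, ne_eq, implies_true, and_true]
    change ∑ j, (k - Pi.single i 2 : ι → ℕ) j = r - 2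
    omega
  calc ∑ k ∈ piAntidiag univ r with ∃ i, 2 ≤ k i, ∏ i, x i ^ k i
      ≤ ∑ k ∈ ((univ : Finset ι) ×ˢ piAntidiag univ (r - 2)).image
          (fun p : ι × (ι → ℕ) => p.2 + Pi.single p.1 2), ∏ i, x i ^ k i :=
        by exact sum_le_sum_of_subset_of_nonneg hcover fun k _ _ => prod_pow_nonneg hx k
    _ ≤ ∑ p ∈ (univ : Finset ι) ×ˢ piAntidiag univ (r - 2),
          ∏ j, x j ^ (p.2 + Pi.single p.1 2 : ι → ℕ) j :=
        by exact sum_image_le_of_nonneg fun k _ => prod_pow_nonneg hx k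
    _ = (∑ i, x i ^ 2) * completeHomogeneous x (r - 2) := by
        simp only [Pi.add_apply, sum_product, Fintype.prod_pow_add_single, completeHomogeneous,
          sum_mul_sum]

theorem factorial_mul_completeHomogeneous_le (hx : ∀ i, 0 ≤ x i) (r : ℕ) :
    r ! * completeHomogeneous x r
      ≤ (∑ i, x i) ^ r + r ! * ((∑ i, x i ^ 2) * completeHomogeneous x (r - 2)) := by
  have hgood : ∑ k ∈ piAntidiag univ r with ¬∃ i, 2 ≤ k i, (r ! : R) * ∏ i, x i ^ k i
      ≤ (∑ i, x i) ^ r := by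
    rw [sum_pow_eq_sum_piAntidiag]
    refine le_of_eq_of_le (sum_congr rfl fun k hk => ?_) (sum_le_sum_of_subset_of_nonneg
      (filter_subset _ _) fun k _ _ => mul_nonneg (Nat.cast_nonneg _) (prod_pow_nonneg hx k))
    obtain ⟨hk, hle⟩ := mem_filter.mp hk
    push Not at hle
    rw [multinomial_eq_factorial_of_le_one fun i _ => Nat.lt_succ_iff.mp (hle i),
      (mem_piAntidiag.mp hk).1]
  rw [completeHomogeneous, ← sum_filter_not_add_sum_filter _ fun k => ∃ i, 2 ≤ k i, mul_add,
    mul_sum]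
  exact add_le_add hgood
    (mul_le_mul_of_nonneg_left (sum_filter_exists_two_le_le hx r) (Nat.cast_nonneg _))

end CompleteHomogeneous

section Estimate

variable {ι R : Type*} [Fintype ι] [DecidableEq ι] [Field R] [LinearOrder R]
  [IsStrictOrderedRing R] {x : ι → R}

theorem completeHomogeneous_sub_sum_pow_div_factorial_le (hx : ∀ i, 0 ≤ x i) (r : ℕ) :
    completeHomogeneous x r - (∑ i, x i) ^ r / r !
      ≤ (∑ i, x i ^ 2) * completeHomogeneous x (r - 2) := by
  have hr : (0 : R) < r ! := by positivity
  rw [sub_le_comm, le_div_iff₀ hr]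
  linarith [factorial_mul_completeHomogeneous_le hx r]

theorem abs_completeHomogeneous_sub_pow_div_factorial_le (hx : ∀ i, 0 ≤ x i) {L c : R}
    (hL : 0 ≤ L) (hLP : L ≤ ∑ i, x i) (hPL : ∑ i, x i ≤ L + 1) (hP : 1 ≤ ∑ i, x i)
    (hc : ∑ i, x i ^ 2 ≤ c) (q : ℕ) :
    |completeHomogeneous x q - L ^ q / q !| ≤ (q + c) * (∑ i, x i) ^ (q - 1) := by
  set P := ∑ i, x i
  have hP0 : 0 ≤ P := zero_le_one.trans hP
  have hc0 : 0 ≤ c := (sum_nonneg fun i _ => sq_nonneg (x i)).trans hc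
  have hq : (1 : R) ≤ q ! := by exact_mod_cast q.factorial_pos
  have hLq : L ^ q ≤ P ^ q := pow_le_pow_left₀ hL hLP q
  have hlow : P ^ q / q ! ≤ completeHomogeneous x q := by
    rw [div_le_iff₀ (by positivity), mul_comm]
    exact sum_pow_le_factorial_mul_completeHomogeneous hx q
  have hquad : completeHomogeneous x q - P ^ q / q ! ≤ c * P ^ (q - 1) :=
    calc completeHomogeneous x q - P ^ q / q !
        ≤ (∑ i, x i ^ 2) * completeHomogeneous x (q - 2) :=
          completeHomogeneous_sub_sum_pow_div_factorial_le hx q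
      _ ≤ c * P ^ (q - 2) :=
          mul_le_mul hc (completeHomogeneous_le_sum_pow hx _)
            (completeHomogeneous_nonneg hx _) hc0
      _ ≤ c * P ^ (q - 1) :=
          mul_le_mul_of_nonneg_left (pow_le_pow_right₀ hP (by omega)) hc0
  have hlin : (P ^ q - L ^ q) / q ! ≤ q * P ^ (q - 1) :=
    calc (P ^ q - L ^ q) / q ! ≤ P ^ q - L ^ q := div_le_self (sub_nonneg.mpr hLq) hq
      _ ≤ |P - L| * q * max |P| |L| ^ (q - 1) := le_abs_self _ |>.trans (abs_pow_sub_pow_le ..)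
      _ ≤ 1 * q * P ^ (q - 1) := by
          rw [abs_of_nonneg hP0, abs_of_nonneg hL, max_eq_left hLP]
          gcongr
          rw [abs_le]
          constructor <;> linarith
      _ = q * P ^ (q - 1) := by ring
  rw [abs_sub_le_iff]
  constructor
  · calc completeHomogeneous x q - L ^ q / q !
        = (completeHomogeneous x q - P ^ q / q !) + (P ^ q - L ^ q) / q ! := by ring
      _ ≤ (q + c) * P ^ (q - 1) := by linarith
  · have hlowL : L ^ q / q ! ≤ completeHomogeneous x q :=
      (div_le_div_of_nonneg_right hLq (by positivity)).trans hlow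
    have : 0 ≤ (q + c) * P ^ (q - 1) := by positivity
    linarith

end Estimate

theorem sum_fin_inv_succ_eq_harmonic (n : ℕ) : ∑ i : Fin n, ((i : ℝ) + 1)⁻¹ = harmonic n := by
  rw [Fin.sum_univ_eq_sum_range (fun i => ((i : ℝ) + 1)⁻¹), harmonic]
  push_cast
  rfl

theorem sum_fin_inv_succ_sq_le_two (n : ℕ) : ∑ i : Fin n, ((i : ℝ) + 1)⁻¹ ^ 2 ≤ 2 := by
  have h := sum_Ioo_inv_sq_le (α := ℝ) 0 (n + 1)
  rw [← Ico_add_one_left_eq_Ioo, ← sum_Ico_add' (c := 1)] at h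
  rw [Fin.sum_univ_eq_sum_range (fun i => ((i : ℝ) + 1)⁻¹ ^ 2), range_eq_Ico]
  simpa [inv_pow] using h

theorem log_le_harmonic (n : ℕ) : Real.log n ≤ harmonic n := by
  obtain rfl | hn := n.eq_zero_or_pos
  · simp
  exact (Real.log_le_log (by positivity) (by simp)).trans (log_add_one_le_harmonic n)

theorem one_le_harmonic {n : ℕ} (hn : n ≠ 0) : 1 ≤ harmonic n := by
  simpa [harmonic] using single_le_sum (fun i _ => by positivity)
    (mem_range.mpr (Nat.pos_of_ne_zero hn)) (f := fun i : ℕ => ((i + 1 : ℕ) : ℚ)⁻¹)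

/-- The polylogarithmic sum `Σ₁^κ(q) = Σ_{q₁+⋯+q_κ=q} 1/(1^{q₁}·2^{q₂}⋯κ^{q_κ})`
satisfies `Σ₁^κ(q) = (log κ)^q / q! + O((log κ)^{q-1})` as `κ → ∞`. -/
theorem stmt_1 (q : ℕ) :
    ∃ C : ℝ, ∀ κ : ℕ, 2 ≤ κ →
      |(∑ f ∈ (Fintype.piFinset fun _ : Fin κ => Finset.range (q + 1)).filter
            (fun f => ∑ i, f i = q),
          (∏ i : Fin κ, (((i : ℕ) : ℝ) + 1) ^ (f i))⁻¹)
        - (Real.log κ) ^ q / (q.factorial : ℝ)| ≤ C * (Real.log κ) ^ (q - 1) := by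
  refine ⟨(q + 2) * 3 ^ (q - 1), fun κ hκ => ?_⟩
  set x : Fin κ → ℝ := fun i => ((i : ℝ) + 1)⁻¹
  have hx : ∑ i, x i = harmonic κ := sum_fin_inv_succ_eq_harmonic κ
  have hlog : 1 / 2 ≤ Real.log κ := by
    have : Real.log 2 ≤ Real.log κ := Real.log_le_log two_pos (by exact_mod_cast hκ)
    linarith [Real.log_two_gt_d9]
  have hH : (1 : ℝ) ≤ harmonic κ := by exact_mod_cast one_le_harmonic (by omega : κ ≠ 0)
  have hHlog : (harmonic κ : ℝ) ≤ Real.log κ + 1 := by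
    rw [add_comm]
    exact harmonic_le_one_add_log κ
  rw [Fintype.filter_piFinset_range_sum_eq_piAntidiag]
  simp only [← inv_pow, ← prod_inv_distrib]
  change |completeHomogeneous x q - _| ≤ _
  calc _ ≤ (q + 2) * (∑ i, x i) ^ (q - 1) :=
        abs_completeHomogeneous_sub_pow_div_factorial_le (fun i => by positivity) (by linarith)
          (hx ▸ log_le_harmonic κ) (hx ▸ hHlog) (hx ▸ hH) (sum_fin_inv_succ_sq_le_two κ) q
    _ ≤ (q + 2) * (3 * Real.log κ) ^ (q - 1) := by rw [hx]; gcongr; linarith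
    _ = (q + 2) * 3 ^ (q - 1) * Real.log κ ^ (q - 1) := by ring
end

section
/- For positive integers n ≤ κ, the number of pairwise distinct columns in any semi-standard Young tableau of depth at most n filled with integers from {1, …, κ} is at most nκ − n(n−1)/2. -/
open Finset

lemma stmt8_col_lb {μ : YoungDiagram} (T : SemistandardYoungTableau μ)
    (hpos : ∀ i j : ℕ, (i, j) ∈ μ → 1 ≤ T i j) :
    ∀ r j, (r, j) ∈ μ → r + 1 ≤ T r j := by
  intro r
  induction r with
  | zero => intro j h; exact hpos 0 j h
  | succ r ih =>
    intro j h
    have hm : (r, j) ∈ μ := μ.up_left_mem (Nat.le_succ r) le_rfl h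
    have h2 : T r j < T (r + 1) j := T.col_strict (Nat.lt_succ_self r) h
    have := ih j hm
    show r + 1 + 1 ≤ T (r + 1) j
    omega

lemma stmt8_col_add {μ : YoungDiagram} (T : SemistandardYoungTableau μ) :
    ∀ (d i j : ℕ), (i + d, j) ∈ μ → T i j + d ≤ T (i + d) j := by
  intro d
  induction d with
  | zero => intro i j _; simp
  | succ d ih =>
    intro i j h
    have hm : (i + d, j) ∈ μ := μ.up_left_mem (by omega) le_rfl h
    have h2 := T.col_strict (show i + d < i + (d + 1) by omega) h
    have := ih i j hm
    omega

/-- The number of pairwise distinct columns in any semi-standard Young tableau of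
depth at most `n`, filled with integers from `{1, …, κ}` (with `n ≤ κ`), is at most
`nκ − n(n−1)/2`. Columns are read as `n`-vectors, padded with `0` outside the diagram. -/
theorem stmt_8 (n κ : ℕ) (hn : 1 ≤ n) (hnκ : n ≤ κ)
    (μ : YoungDiagram) (T : SemistandardYoungTableau μ)
    (hdepth : μ.colLen 0 ≤ n)
    (hpos : ∀ i j : ℕ, (i, j) ∈ μ → 1 ≤ T i j)
    (hbd : ∀ i j : ℕ, (i, j) ∈ μ → T i j ≤ κ) :
    (Finset.image (fun j => fun r : Fin n => T (r : ℕ) j)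
        (Finset.range (μ.rowLen 0))).card ≤ n * κ - n * (n - 1) / 2 := by
  classical
  set L := μ.rowLen 0 with hLdef
  set c : ℕ → Fin n → ℕ := fun j r => T (r : ℕ) j with hcdef
  set F : (Fin n → ℕ) → ℕ :=
    fun v => ∑ r : Fin n, (if v r = 0 then κ - (r : ℕ) else v r - ((r : ℕ) + 1)) with hFdef
  have hge := stmt8_col_lb T hpos
  -- column lengths
  have hcol_le : ∀ j, μ.colLen j ≤ n := fun j =>
    le_trans (μ.colLen_anti 0 j (Nat.zero_le j)) hdepth
  have hcol_pos : ∀ j < L, 0 < μ.colLen j := by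
    intro j hj
    rw [← YoungDiagram.mem_iff_lt_colLen]
    exact YoungDiagram.mem_iff_lt_rowLen.2 hj
  have hzero : ∀ r j : ℕ, T r j = 0 ↔ (r, j) ∉ μ := by
    intro r j
    constructor
    · intro h0 hmem
      have := hpos r j hmem; omega
    · exact T.zeros
  -- top bound: entries in column j
  have htop : ∀ r j : ℕ, (r, j) ∈ μ → T r j + (μ.colLen j - 1 - r) ≤ κ := by
    intro r j hm
    have hr : r < μ.colLen j := YoungDiagram.mem_iff_lt_colLen.1 hm
    have hm' : (r + (μ.colLen j - 1 - r), j) ∈ μ := by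
      rw [YoungDiagram.mem_iff_lt_colLen]; omega
    have h1 := stmt8_col_add T (μ.colLen j - 1 - r) r j hm'
    have h2 := hbd _ j hm'
    omega
  -- Gauss sum
  have hgauss : (∑ i ∈ Finset.range n, i) * 2 = n * (n - 1) := Finset.sum_range_id_mul_two n
  -- claim 1: bound on F
  have claim1 : ∀ j < L, F (c j) < n * κ - n * (n - 1) / 2 := by
    intro j hj
    have key : F (c j) + ∑ i ∈ Finset.range n, i < n * κ := by
      have hsum : F (c j) + ∑ r : Fin n, (r : ℕ) =
          ∑ r : Fin n, ((if c j r = 0 then κ - (r : ℕ) else c j r - ((r : ℕ) + 1)) + (r : ℕ)) := by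
        rw [Finset.sum_add_distrib]
      have hlt : ∑ r : Fin n, ((if c j r = 0 then κ - (r : ℕ) else c j r - ((r : ℕ) + 1)) + (r : ℕ))
          < ∑ _r : Fin n, κ := by
        apply Finset.sum_lt_sum
        · intro r _
          by_cases hr : T (r : ℕ) j = 0
          · simp only [hcdef, hr, if_pos]
            have : (r : ℕ) < n := r.isLt
            omega
          · have hmem : ((r : ℕ), j) ∈ μ := by
              by_contra hc; exact hr (T.zeros hc)
            have h1 := hge (r : ℕ) j hmem
            have h2 := htop (r : ℕ) j hmem
            have h3 := hcol_pos j hj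
            simp only [hcdef, hr, if_neg, if_false]
            omega
        · refine ⟨⟨0, by omega⟩, Finset.mem_univ _, ?_⟩
          have hmem : (0, j) ∈ μ := YoungDiagram.mem_iff_lt_rowLen.2 hj
          have hr : T 0 j ≠ 0 := by have := hpos 0 j hmem; omega
          have h2 := htop 0 j hmem
          have h3 := hcol_pos j hj
          simp only [hcdef, Fin.val_mk]
          rw [if_neg hr]
          omega
      have hconst : ∑ _r : Fin n, κ = n * κ := by
        simp [Finset.card_univ, mul_comm]
      have hfin : ∑ r : Fin n, (r : ℕ) = ∑ i ∈ Finset.range n, i :=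
        Fin.sum_univ_eq_sum_range (fun i => i) n
      omega
    omega
  -- step lemma
  have hstep : ∀ j, j + 1 < L → F (c j) ≤ F (c (j + 1)) ∧
      (c j ≠ c (j + 1) → F (c j) < F (c (j + 1))) := by
    intro j hj1
    have hjL : j < L := by omega
    have h1 := hcol_pos (j + 1) hj1
    have hanti : μ.colLen (j + 1) ≤ μ.colLen j := μ.colLen_anti j (j + 1) (by omega)
    -- termwise
    have hterm : ∀ r : Fin n,
        (if c j r = 0 then κ - (r : ℕ) else c j r - ((r : ℕ) + 1)) ≤
        (if c (j + 1) r = 0 then κ - (r : ℕ) else c (j + 1) r - ((r : ℕ) + 1)) ∧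
        (c j r ≠ c (j + 1) r →
          (if c j r = 0 then κ - (r : ℕ) else c j r - ((r : ℕ) + 1)) <
          (if c (j + 1) r = 0 then κ - (r : ℕ) else c (j + 1) r - ((r : ℕ) + 1))) := by
      intro r
      by_cases hr1 : (r : ℕ) < μ.colLen (j + 1)
      · -- both present
        have hm2 : ((r : ℕ), j + 1) ∈ μ := YoungDiagram.mem_iff_lt_colLen.2 hr1
        have hm1 : ((r : ℕ), j) ∈ μ := μ.up_left_mem le_rfl (by omega) hm2
        have hw := T.row_weak (lt_add_one j) hm2
        have g1 := hge (r : ℕ) j hm1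
        have g2 := hge (r : ℕ) (j + 1) hm2
        have hne1 : T (r : ℕ) j ≠ 0 := by omega
        have hne2 : T (r : ℕ) (j + 1) ≠ 0 := by omega
        simp only [hcdef, hne1, hne2, if_neg, if_false]
        omega
      · by_cases hr2 : (r : ℕ) < μ.colLen j
        · -- present in j, absent in j+1
          have hm1 : ((r : ℕ), j) ∈ μ := YoungDiagram.mem_iff_lt_colLen.2 hr2
          have hm2 : ((r : ℕ), j + 1) ∉ μ := by
            rw [YoungDiagram.mem_iff_lt_colLen]; omega
          have hz2 : T (r : ℕ) (j + 1) = 0 := T.zeros hm2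
          have hne1 : T (r : ℕ) j ≠ 0 := by have := hpos _ _ hm1; omega
          have g1 := hge (r : ℕ) j hm1
          have h2 := htop (r : ℕ) j hm1
          have hrκ : (r : ℕ) < κ := lt_of_lt_of_le r.isLt hnκ
          simp only [hcdef, hne1, hz2, if_neg, if_pos, if_false]
          omega
        · -- both absent
          have hm1 : ((r : ℕ), j) ∉ μ := by
            rw [YoungDiagram.mem_iff_lt_colLen]; omega
          have hm2 : ((r : ℕ), j + 1) ∉ μ := by
            rw [YoungDiagram.mem_iff_lt_colLen]; omega
          have hz1 : T (r : ℕ) j = 0 := T.zeros hm1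
          have hz2 : T (r : ℕ) (j + 1) = 0 := T.zeros hm2
          simp only [hcdef, hz1, hz2, if_pos]
          exact ⟨le_rfl, fun h => absurd (by simp [hcdef, hz1, hz2]) h⟩
    constructor
    · exact Finset.sum_le_sum (fun r _ => (hterm r).1)
    · intro hne
      obtain ⟨r, hr⟩ := Function.ne_iff.1 hne
      exact Finset.sum_lt_sum (fun i _ => (hterm i).1) ⟨r, Finset.mem_univ r, (hterm r).2 hr⟩
  -- monotonicity
  have hmono : ∀ j j' : ℕ, j ≤ j' → j' < L → F (c j) ≤ F (c j') ∧
      (c j ≠ c j' → F (c j) < F (c j')) := by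
    intro j j' hle hlt
    induction j', hle using Nat.le_induction with
    | base => exact ⟨le_rfl, fun h => absurd rfl h⟩
    | succ m hjm ih =>
      have hmL : m < L := by omega
      have ihm := ih hmL
      have hs := hstep m hlt
      constructor
      · exact le_trans ihm.1 hs.1
      · intro hne
        by_cases hcm : c j = c m
        · have : c m ≠ c (m + 1) := by rw [← hcm]; exact hne
          have := hs.2 this
          rw [hcm]; exact this
        · exact lt_of_lt_of_le (ihm.2 hcm) hs.1
  -- conclude
  have hinj : Set.InjOn F ↑(Finset.image c (Finset.range L)) := by
    intro a ha b hb hab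
    simp only [Finset.coe_image, Set.mem_image, Finset.mem_coe, Finset.mem_range] at ha hb
    obtain ⟨j, hj, rfl⟩ := ha
    obtain ⟨j', hj', rfl⟩ := hb
    by_contra hne
    rcases le_total j j' with h | h
    · have := (hmono j j' h hj').2 hne
      omega
    · have := (hmono j' j h hj).2 (Ne.symm hne)
      omega
  have hmaps : ∀ a ∈ Finset.image c (Finset.range L),
      F a ∈ Finset.range (n * κ - n * (n - 1) / 2) := by
    intro a ha
    obtain ⟨j, hj, rfl⟩ := Finset.mem_image.1 ha
    rw [Finset.mem_range]
    exact claim1 j (Finset.mem_range.1 hj)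
  calc (Finset.image c (Finset.range L)).card
      ≤ (Finset.range (n * κ - n * (n - 1) / 2)).card :=
        Finset.card_le_card_of_injOn F hmaps hinj
    _ = n * κ - n * (n - 1) / 2 := Finset.card_range _
end

section
/- For a partition (ℓ₁ ≥ ℓ₂ ≥ ⋯ ≥ ℓ_n ≥ 0), the number of ways to fill the Young diagram of shape (ℓ₁, …, ℓ_n) with the integers 1, 2, …, r (each used exactly once, where r = ℓ₁ + ⋯ + ℓ_n) so that entries strictly increase along each row and strictly increase down each column equals r! divided by the product of all hook lengths h_{i,j} of the diagram. -/
/-!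
Deleting the largest entry of a standard tableau of shape `μ` leaves a standard tableau of the
shape `μ ∖ γ` obtained by removing a corner `γ`, so the number `f μ` of tableaux satisfies
`f μ = ∑ γ, f (μ ∖ γ)`. It therefore suffices that `H μ / H (μ ∖ γ)`, with `H` the product of
the hook lengths, sums to `#μ` over the corners. For `γ = (a, b)` this ratio is
`∏_{i<a} h_{i,b} / (h_{i,b} - 1) * ∏_{j<b} h_{a,j} / (h_{a,j} - 1)`; expanding the products, it
becomes the sum over all cells `c` of the probability that the hook walk of Greene, Nijenhuis and
Wilf started at `c` ends at `γ`. For fixed `c` these probabilities sum to `1`, by induction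
downwards from the corners using the first-step equation `(h_c - 1) p_c = ∑_{c' ∈ hook c} p_{c'}`.
-/

open Finset

abbrev NaturalLabeling {α : Type*} [PartialOrder α] (s : Finset α) : Type _ :=
  {e : s ≃ Fin #s // StrictMono e}

namespace NaturalLabeling

section Labels

variable {α : Type*} {s : Finset α} {m : α}

def topLabel (hs : s.Nonempty) : Fin #s := ⟨#s - 1, by have := hs.card_pos; omega⟩

variable [DecidableEq α]

theorem val_lt_card_erase (hm : m ∈ s) (e : s ≃ Fin #s) (he : e ⟨m, hm⟩ = topLabel ⟨m, hm⟩)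
    (c : s.erase m) : (e ⟨c, mem_of_mem_erase c.2⟩ : ℕ) < #(s.erase m) := by
  have hne : e ⟨c, mem_of_mem_erase c.2⟩ ≠ topLabel ⟨m, hm⟩ := by
    rw [← he, e.injective.ne_iff, ne_eq, Subtype.mk.injEq]
    exact ne_of_mem_erase c.2
  have := (e ⟨c, mem_of_mem_erase c.2⟩).isLt
  simp only [ne_eq, Fin.ext_iff, topLabel] at hne
  rw [card_erase_of_mem hm]
  omega

noncomputable def restrict (hm : m ∈ s) (e : s ≃ Fin #s) (he : e ⟨m, hm⟩ = topLabel ⟨m, hm⟩) :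
    s.erase m ≃ Fin #(s.erase m) :=
  Equiv.ofBijective (fun c => ⟨e ⟨c, mem_of_mem_erase c.2⟩, val_lt_card_erase hm e he c⟩) <|
    (Fintype.bijective_iff_injective_and_card _).2 ⟨fun c d hcd => Subtype.ext <|
      congrArg (Subtype.val : s → α) <| e.injective <| Fin.ext <| Fin.mk.inj_iff.1 hcd, by simp⟩

noncomputable def extend (hm : m ∈ s) (e : s.erase m ≃ Fin #(s.erase m)) : s ≃ Fin #s :=
  Equiv.ofBijective (fun c => if h : c.1 = m then topLabel ⟨m, hm⟩
      else (e ⟨c, mem_erase.2 ⟨h, c.2⟩⟩).castLE card_erase_le) <|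
    (Fintype.bijective_iff_injective_and_card _).2 ⟨fun c d hcd => by
      have hlt := fun c => (e c).isLt
      have hcard := card_erase_of_mem hm
      by_cases hc : c.1 = m <;> by_cases hd : d.1 = m <;>
        simp only [hc, hd, dite_true, dite_false, Fin.ext_iff, Fin.val_castLE, topLabel] at hcd
      · exact Subtype.ext (hc.trans hd.symm)
      · have := hlt ⟨d, mem_erase.2 ⟨hd, d.2⟩⟩; omega
      · have := hlt ⟨c, mem_erase.2 ⟨hc, c.2⟩⟩; omega
      · exact Subtype.ext <| congrArg (Subtype.val : s.erase m → α) <| e.injective <| Fin.ext hcd,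
      by simp⟩

theorem restrict_apply (hm : m ∈ s) (e : s ≃ Fin #s) (he) (c : s.erase m) :
    (restrict hm e he c : ℕ) = e ⟨c, mem_of_mem_erase c.2⟩ := rfl

theorem extend_apply_of_eq (hm : m ∈ s) (e : s.erase m ≃ Fin #(s.erase m)) {c : s}
    (hc : c.1 = m) : extend hm e c = topLabel ⟨m, hm⟩ :=
  dif_pos hc

theorem extend_apply_of_ne (hm : m ∈ s) (e : s.erase m ≃ Fin #(s.erase m)) {c : s}
    (hc : c.1 ≠ m) : (extend hm e c : ℕ) = e ⟨c, mem_erase.2 ⟨hc, c.2⟩⟩ := by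
  simp [extend, hc]

end Labels

variable {α : Type*} [PartialOrder α] {s : Finset α} {m : α}

theorem maximal_symm_topLabel (hs : s.Nonempty) (e : NaturalLabeling s) :
    Maximal (· ∈ s) (e.1.symm (topLabel hs)).1 := by
  refine ⟨(e.1.symm _).2, fun y hy hle => ?_⟩
  by_contra hyle
  have hlt := e.2 (show e.1.symm (topLabel hs) < ⟨y, hy⟩ from lt_of_le_not_ge hle hyle)
  rw [Equiv.apply_symm_apply, Fin.lt_def] at hlt
  have := (e.1 ⟨y, hy⟩).isLt
  simp only [topLabel] at hlt
  omega

theorem card_empty : Nat.card (NaturalLabeling (∅ : Finset α)) = 1 := by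
  have : IsEmpty (Fin #(∅ : Finset α)) := by rw [Finset.card_empty]; infer_instance
  exact Nat.card_eq_one_iff_unique.2 ⟨⟨fun e e' => Subtype.ext (Equiv.ext isEmptyElim)⟩,
    ⟨⟨Equiv.equivOfIsEmpty _ _, fun c => isEmptyElim c⟩⟩⟩

variable [DecidableEq α]

theorem strictMono_restrict (hm : m ∈ s) {e : s ≃ Fin #s} (he) (hmono : StrictMono e) :
    StrictMono (restrict hm e he) := fun c d hcd =>
  Fin.lt_def.2 <| Fin.lt_def.1 <| @hmono ⟨c, _⟩ ⟨d, _⟩ hcd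

theorem strictMono_extend (hm : Maximal (· ∈ s) m) {e : s.erase m ≃ Fin #(s.erase m)}
    (hmono : StrictMono e) : StrictMono (extend hm.1 e) := by
  intro c d hcd
  have hcm : c.1 ≠ m := fun h => hcd.not_ge (show d.1 ≤ c.1 from h ▸ hm.2 d.2 (h ▸ hcd.le))
  rw [Fin.lt_def, extend_apply_of_ne hm.1 e hcm]
  by_cases hdm : d.1 = m
  · rw [extend_apply_of_eq hm.1 e hdm]
    have := (e ⟨c, mem_erase.2 ⟨hcm, c.2⟩⟩).isLt
    have := card_erase_of_mem hm.1
    simp only [topLabel]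
    omega
  · rw [extend_apply_of_ne hm.1 e hdm]
    exact @hmono ⟨c, _⟩ ⟨d, _⟩ hcd

noncomputable def equivErase (hm : Maximal (· ∈ s) m) :
    {e : NaturalLabeling s // e.1 ⟨m, hm.1⟩ = topLabel ⟨m, hm.1⟩} ≃
      NaturalLabeling (s.erase m) where
  toFun e := ⟨restrict hm.1 e.1.1 e.2, strictMono_restrict hm.1 e.2 e.1.2⟩
  invFun e := ⟨⟨extend hm.1 e.1, strictMono_extend hm e.2⟩, extend_apply_of_eq hm.1 e.1 rfl⟩
  left_inv e := by
    ext c : 4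
    by_cases hc : c.1 = m
    · obtain rfl : c = ⟨m, hm.1⟩ := Subtype.ext hc
      rw [extend_apply_of_eq hm.1 _ rfl, e.2]
    · rw [extend_apply_of_ne hm.1 _ hc, restrict_apply]
  right_inv e := by
    ext c : 4
    rw [restrict_apply, extend_apply_of_ne hm.1 _ (ne_of_mem_erase c.2)]

open Classical in
theorem card_eq_sum_card_erase (hs : s.Nonempty) :
    Nat.card (NaturalLabeling s) =
      ∑ m ∈ s with Maximal (· ∈ s) m, Nat.card (NaturalLabeling (s.erase m)) := by
  set M := {m ∈ s | Maximal (· ∈ s) m}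
  let top (e : NaturalLabeling s) : M :=
    ⟨(e.1.symm (topLabel hs)).1, mem_filter.2 ⟨coe_mem _, maximal_symm_topLabel hs e⟩⟩
  have hfiber (m : M) : {e // top e = m} ≃ NaturalLabeling (s.erase m) := by
    refine (Equiv.subtypeEquivRight fun e => ?_).trans (equivErase (mem_filter.1 m.2).2)
    rw [Subtype.ext_iff, ← Equiv.eq_symm_apply, Subtype.ext_iff, eq_comm]
  rw [← Nat.card_congr (Equiv.sigmaFiberEquiv top), Nat.card_sigma, ← sum_coe_sort M]
  exact sum_congr rfl fun m _ => Nat.card_congr (hfiber m)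

end NaturalLabeling

section TailProduct

variable {K : Type*} [Field K] (h : ℕ → K) (a : ℕ)

def tailProd (x : ℕ) : K := ∏ i ∈ Ico x a, h i / (h i - 1)

def tailWeight (x : ℕ) : K := if x ≤ a then tailProd h a x / h x else 0

variable {h a}

theorem tailProd_eq_mul {x : ℕ} (hx : x < a) :
    tailProd h a x = h x / (h x - 1) * tailProd h a (x + 1) :=
  prod_eq_prod_Ico_succ_bot hx _

theorem tailWeight_of_lt {x : ℕ} (hx : a < x) : tailWeight h a x = 0 :=
  if_neg (not_le.2 hx)

variable [LinearOrder K] [IsStrictOrderedRing K]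

theorem sum_Icc_tailWeight (ha : h a = 1) (hh : ∀ i < a, 1 < h i) {x : ℕ} (hx : x ≤ a) :
    ∑ i ∈ Icc x a, tailWeight h a i = tailProd h a x := by
  induction hx using Nat.decreasingInduction with
  | self => simp [tailWeight, tailProd, ha]
  | of_succ x hx ih =>
    rw [Icc_eq_cons_Ioc hx.le, sum_cons, ← Icc_add_one_left_eq_Ioc, ih, tailWeight,
      if_pos hx.le, tailProd_eq_mul hx]
    have h₀ : h x ≠ 0 := (one_pos.trans (hh x hx)).ne'
    have h₁ : h x - 1 ≠ 0 := (sub_pos.2 (hh x hx)).ne'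
    field_simp
    ring

theorem sum_Ioo_tailWeight (ha : h a = 1) (hh : ∀ i < a, 1 < h i) {m : ℕ} (hm : a < m)
    (x : ℕ) : ∑ i ∈ Ioo x m, tailWeight h a i = (h x - 1) * tailWeight h a x := by
  rw [← sum_subset (Ioc_subset_Ioo_right hm) fun i hi hia => tailWeight_of_lt <| by
    simp only [mem_Ioo, mem_Ioc, not_and, not_le] at hi hia; exact hia hi.1]
  rcases lt_trichotomy x a with hx | rfl | hx
  · rw [← Icc_add_one_left_eq_Ioc, sum_Icc_tailWeight ha hh (x := x + 1) hx, tailWeight,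
      if_pos hx.le, tailProd_eq_mul hx]
    have h₀ : h x ≠ 0 := (one_pos.trans (hh x hx)).ne'
    have h₁ : h x - 1 ≠ 0 := (sub_pos.2 (hh x hx)).ne'
    field_simp
  · simp [ha]
  · simp [tailWeight_of_lt hx, Ioc_eq_empty_of_le hx.le]

end TailProduct

namespace YoungDiagram

variable (μ : YoungDiagram)

theorem row_col_lt_iff_strictMono {β : Type*} [Preorder β] (e : μ.cells → β) :
    (∀ c c' : μ.cells, ((c.1.1 = c'.1.1 ∧ c.1.2 < c'.1.2) → e c < e c') ∧
      ((c.1.2 = c'.1.2 ∧ c.1.1 < c'.1.1) → e c < e c')) ↔ StrictMono e := by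
  refine ⟨fun h c d hcd => ?_, fun h c c' => ⟨fun hc => h ?_, fun hc => h ?_⟩⟩
  · obtain ⟨hle₁, hle₂⟩ := hcd.le
    rcases hle₂.lt_or_eq with hlt₂ | heq₂
    · -- pass through the cell in the row of `c` and the column of `d`
      let x : μ.cells := ⟨(c.1.1, d.1.2), (mem_cells _).2 <|
        μ.up_left_mem hle₁ le_rfl ((mem_cells _).1 d.2)⟩
      have hcx : e c < e x := (h c x).1 ⟨rfl, hlt₂⟩
      rcases hle₁.lt_or_eq with hlt₁ | heq₁
      · exact hcx.trans ((h x d).2 ⟨rfl, hlt₁⟩)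
      · rwa [show x = d from Subtype.ext (Prod.ext heq₁ rfl)] at hcx
    · refine (h c d).2 ⟨heq₂, hle₁.lt_of_ne fun heq₁ => hcd.ne ?_⟩
      exact Subtype.ext (Prod.ext heq₁ heq₂)
  · exact Prod.lt_iff.2 (Or.inr ⟨hc.1.le, hc.2⟩)
  · exact Prod.lt_iff.2 (Or.inl ⟨hc.2, hc.1.le⟩)

variable {μ} {γ : ℕ × ℕ}

theorem rowLen_of_maximal (hγ : Maximal (· ∈ μ.cells) γ) : μ.rowLen γ.1 = γ.2 + 1 := by
  have hlt := mem_iff_lt_rowLen.1 ((mem_cells _).1 hγ.1)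
  by_contra hne
  have hmem : (γ.1, γ.2 + 1) ∈ μ.cells := (mem_cells _).2 (mem_iff_lt_rowLen.2 (by omega))
  have := (hγ.2 hmem ⟨le_rfl, Nat.le_succ _⟩).2
  omega

theorem colLen_of_maximal (hγ : Maximal (· ∈ μ.cells) γ) : μ.colLen γ.2 = γ.1 + 1 := by
  have hlt := mem_iff_lt_colLen.1 ((mem_cells _).1 hγ.1)
  by_contra hne
  have hmem : (γ.1 + 1, γ.2) ∈ μ.cells := (mem_cells _).2 (mem_iff_lt_colLen.2 (by omega))
  have := (hγ.2 hmem ⟨Nat.le_succ _, le_rfl⟩).1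
  omega

def eraseCorner (γ : ℕ × ℕ) (hγ : Maximal (· ∈ μ.cells) γ) : YoungDiagram where
  cells := μ.cells.erase γ
  isLowerSet c d hdc hc := by
    simp only [coe_erase, Set.mem_sdiff, mem_coe, Set.mem_singleton_iff] at hc ⊢
    refine ⟨μ.isLowerSet hdc hc.1, ?_⟩
    rintro rfl
    exact hc.2 (le_antisymm (hγ.2 hc.1 hdc) hdc)

theorem cells_eraseCorner (hγ : Maximal (· ∈ μ.cells) γ) :
    (μ.eraseCorner γ hγ).cells = μ.cells.erase γ :=
  rfl

theorem rowLen_eraseCorner (hγ : Maximal (· ∈ μ.cells) γ) (i : ℕ) :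
    (μ.eraseCorner γ hγ).rowLen i = if γ.1 = i then μ.rowLen i - 1 else μ.rowLen i := by
  rw [rowLen_eq_card, rowLen_eq_card, row, row, cells_eraseCorner, filter_erase,
    card_erase_eq_ite]
  simp only [mem_filter, hγ.1, true_and]

theorem colLen_eraseCorner (hγ : Maximal (· ∈ μ.cells) γ) (j : ℕ) :
    (μ.eraseCorner γ hγ).colLen j = if γ.2 = j then μ.colLen j - 1 else μ.colLen j := by
  rw [colLen_eq_card, colLen_eq_card, col, col, cells_eraseCorner, filter_erase,
    card_erase_eq_ite]
  simp only [mem_filter, hγ.1, true_and]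

variable (μ) in
def hookLength (c : ℕ × ℕ) : ℕ := (μ.rowLen c.1 - c.2) + (μ.colLen c.2 - c.1) - 1

theorem hookLength_eq_card_Ioo_add_card_Ioo {c : ℕ × ℕ} (hc : c ∈ μ.cells) :
    μ.hookLength c = #(Ioo c.2 (μ.rowLen c.1)) + #(Ioo c.1 (μ.colLen c.2)) + 1 := by
  have := mem_iff_lt_rowLen.1 ((mem_cells _).1 hc)
  have := mem_iff_lt_colLen.1 ((mem_cells _).1 hc)
  rw [Nat.card_Ioo, Nat.card_Ioo, hookLength]
  omega

theorem hookLength_pos {c : ℕ × ℕ} (hc : c ∈ μ.cells) : 0 < μ.hookLength c := by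
  rw [hookLength_eq_card_Ioo_add_card_Ioo hc]
  exact Nat.succ_pos _

theorem hookLength_of_maximal (hγ : Maximal (· ∈ μ.cells) γ) : μ.hookLength γ = 1 := by
  rw [hookLength, rowLen_of_maximal hγ, colLen_of_maximal hγ]
  omega

theorem one_lt_hookLength {c : ℕ × ℕ} (hc : c ∈ μ.cells) (hnc : ¬Maximal (· ∈ μ.cells) c) :
    1 < μ.hookLength c := by
  refine lt_of_not_ge fun hle => hnc ⟨hc, fun d hd hcd => ?_⟩
  have hc₁ := mem_iff_lt_rowLen.1 ((mem_cells _).1 hc)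
  have hc₂ := mem_iff_lt_colLen.1 ((mem_cells _).1 hc)
  have hd₁ := mem_iff_lt_rowLen.1 ((mem_cells _).1 hd)
  have hd₂ := mem_iff_lt_colLen.1 ((mem_cells _).1 hd)
  have := μ.rowLen_anti _ _ hcd.1
  have := μ.colLen_anti _ _ hcd.2
  unfold hookLength at hle
  exact ⟨by omega, by omega⟩

theorem hookLength_eraseCorner (hγ : Maximal (· ∈ μ.cells) γ) {c : ℕ × ℕ}
    (hc : c ∈ μ.cells.erase γ) :
    (μ.eraseCorner γ hγ).hookLength c =
      if c.1 = γ.1 ∨ c.2 = γ.2 then μ.hookLength c - 1 else μ.hookLength c := by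
  obtain ⟨hne, hc⟩ := mem_erase.1 hc
  have hc₁ := mem_iff_lt_rowLen.1 ((mem_cells _).1 hc)
  have hc₂ := mem_iff_lt_colLen.1 ((mem_cells _).1 hc)
  have hγ₁ := rowLen_of_maximal hγ
  have hγ₂ := colLen_of_maximal hγ
  have hne' : c.1 ≠ γ.1 ∨ c.2 ≠ γ.2 := by
    by_contra! h; exact hne (Prod.ext h.1 h.2)
  unfold hookLength
  rw [rowLen_eraseCorner, colLen_eraseCorner]
  split_ifs <;> omega

theorem hookLength_add_one (hγ : Maximal (· ∈ μ.cells) γ) {c : ℕ × ℕ} (hcγ : c ≤ γ) :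
    μ.hookLength c + 1 = μ.hookLength (c.1, γ.2) + μ.hookLength (γ.1, c.2) := by
  have hγ₁ := rowLen_of_maximal hγ
  have hγ₂ := colLen_of_maximal hγ
  have h₁ := mem_iff_lt_rowLen.1 (μ.up_left_mem hcγ.1 le_rfl ((mem_cells _).1 hγ.1))
  have h₂ := mem_iff_lt_colLen.1 (μ.up_left_mem le_rfl hcγ.2 ((mem_cells _).1 hγ.1))
  have := hcγ.1
  have := hcγ.2
  dsimp only [hookLength]
  omega

variable (μ) in
open Classical in
noncomputable def corners : Finset (ℕ × ℕ) := {γ ∈ μ.cells | Maximal (· ∈ μ.cells) γ}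

open Classical in
theorem mem_corners : γ ∈ μ.corners ↔ Maximal (· ∈ μ.cells) γ :=
  mem_filter.trans (and_iff_right_of_imp Maximal.prop)

theorem one_lt_hookLength_of_lt (hγ : γ ∈ μ.cells) {c : ℕ × ℕ} (hc : c < γ) :
    1 < μ.hookLength c :=
  one_lt_hookLength (μ.isLowerSet hc.le hγ) fun hmax => hc.not_ge (hmax.2 hγ hc.le)

variable (μ) in
def hookCol (γ : ℕ × ℕ) (i : ℕ) : ℚ := μ.hookLength (i, γ.2)

variable (μ) in
def hookRow (γ : ℕ × ℕ) (j : ℕ) : ℚ := μ.hookLength (γ.1, j)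

theorem hookCol_self (hγ : Maximal (· ∈ μ.cells) γ) : μ.hookCol γ γ.1 = 1 := by
  simp [hookCol, hookLength_of_maximal hγ]

theorem hookRow_self (hγ : Maximal (· ∈ μ.cells) γ) : μ.hookRow γ γ.2 = 1 := by
  simp [hookRow, hookLength_of_maximal hγ]

theorem one_lt_hookCol (hγ : Maximal (· ∈ μ.cells) γ) : ∀ i < γ.1, 1 < μ.hookCol γ i :=
  fun _ hi => Nat.one_lt_cast.2 <| one_lt_hookLength_of_lt hγ.1 <|
    Prod.lt_iff.2 (Or.inl ⟨hi, le_rfl⟩)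

theorem one_lt_hookRow (hγ : Maximal (· ∈ μ.cells) γ) : ∀ j < γ.2, 1 < μ.hookRow γ j :=
  fun _ hj => Nat.one_lt_cast.2 <| one_lt_hookLength_of_lt hγ.1 <|
    Prod.lt_iff.2 (Or.inr ⟨le_rfl, hj⟩)

variable (μ) in
def hookWalkProb (c γ : ℕ × ℕ) : ℚ :=
  tailWeight (μ.hookCol γ) γ.1 c.1 * tailWeight (μ.hookRow γ) γ.2 c.2

variable (μ) in
def cornerWeight (γ : ℕ × ℕ) : ℚ :=
  tailProd (μ.hookCol γ) γ.1 0 * tailProd (μ.hookRow γ) γ.2 0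

theorem hookWalkProb_of_not_le {c : ℕ × ℕ} (h : ¬c ≤ γ) : μ.hookWalkProb c γ = 0 := by
  rcases not_and_or.1 (Prod.mk_le_mk.not.1 h) with h | h
  · rw [hookWalkProb, tailWeight_of_lt (not_le.1 h), zero_mul]
  · rw [hookWalkProb, tailWeight_of_lt (not_le.1 h), mul_zero]

theorem hookWalkProb_self (hγ : Maximal (· ∈ μ.cells) γ) : μ.hookWalkProb γ γ = 1 := by
  simp [hookWalkProb, tailWeight, tailProd, hookCol_self hγ, hookRow_self hγ]

theorem hookLength_sub_one_mul_hookWalkProb (hγ : Maximal (· ∈ μ.cells) γ) (c : ℕ × ℕ) :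
    ((μ.hookLength c : ℚ) - 1) * μ.hookWalkProb c γ =
      ∑ j ∈ Ioo c.2 (μ.rowLen c.1), μ.hookWalkProb (c.1, j) γ +
        ∑ i ∈ Ioo c.1 (μ.colLen c.2), μ.hookWalkProb (i, c.2) γ := by
  by_cases hcγ : c ≤ γ
  · have hγμ := (mem_cells _).1 hγ.1
    have hrow := mem_iff_lt_rowLen.1 (μ.up_left_mem hcγ.1 le_rfl hγμ)
    have hcol := mem_iff_lt_colLen.1 (μ.up_left_mem le_rfl hcγ.2 hγμ)
    have hsplit :
        (μ.hookLength c : ℚ) - 1 = (μ.hookCol γ c.1 - 1) + (μ.hookRow γ c.2 - 1) := by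
      have := congrArg (Nat.cast : ℕ → ℚ) (hookLength_add_one hγ hcγ)
      push_cast at this
      rw [hookCol, hookRow]
      linarith
    simp only [hookWalkProb, ← mul_sum, ← sum_mul]
    rw [sum_Ioo_tailWeight (hookRow_self hγ) (one_lt_hookRow hγ) hrow,
      sum_Ioo_tailWeight (hookCol_self hγ) (one_lt_hookCol hγ) hcol, hsplit]
    ring
  · rw [hookWalkProb_of_not_le hcγ, mul_zero, sum_eq_zero, sum_eq_zero, add_zero]
    · exact fun i hi => hookWalkProb_of_not_le fun h => hcγ ⟨(mem_Ioo.1 hi).1.le.trans h.1, h.2⟩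
    · exact fun j hj => hookWalkProb_of_not_le fun h => hcγ ⟨h.1, (mem_Ioo.1 hj).1.le.trans h.2⟩

theorem sum_hookWalkProb {c : ℕ × ℕ} (hc : c ∈ μ.cells) :
    ∑ γ ∈ μ.corners, μ.hookWalkProb c γ = 1 := by
  refine Set.WellFoundedOn.induction (P := fun c => ∑ γ ∈ μ.corners, μ.hookWalkProb c γ = 1)
    (μ.cells.finite_toSet.wellFoundedOn (r := (· > ·))) hc fun c hc ih => ?_
  rw [mem_coe] at hc
  by_cases hmax : Maximal (· ∈ μ.cells) c
  · rw [sum_eq_single_of_mem c (mem_corners.2 hmax) fun γ hγ hne =>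
      hookWalkProb_of_not_le fun hle => hne (le_antisymm (hmax.2 (mem_corners.1 hγ).1 hle) hle)]
    exact hookWalkProb_self hmax
  have harm : ∑ j ∈ Ioo c.2 (μ.rowLen c.1), ∑ γ ∈ μ.corners, μ.hookWalkProb (c.1, j) γ =
      #(Ioo c.2 (μ.rowLen c.1)) := by
    rw [sum_congr rfl fun j hj => ih _ ((mem_cells _).2 (mem_iff_lt_rowLen.2 (mem_Ioo.1 hj).2))
      (Prod.lt_iff.2 (Or.inr ⟨le_rfl, (mem_Ioo.1 hj).1⟩))]
    simp
  have hleg : ∑ i ∈ Ioo c.1 (μ.colLen c.2), ∑ γ ∈ μ.corners, μ.hookWalkProb (i, c.2) γ =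
      #(Ioo c.1 (μ.colLen c.2)) := by
    rw [sum_congr rfl fun i hi => ih _ ((mem_cells _).2 (mem_iff_lt_colLen.2 (mem_Ioo.1 hi).2))
      (Prod.lt_iff.2 (Or.inl ⟨(mem_Ioo.1 hi).1, le_rfl⟩))]
    simp
  have hhook :
      (μ.hookLength c : ℚ) - 1 = #(Ioo c.2 (μ.rowLen c.1)) + #(Ioo c.1 (μ.colLen c.2)) := by
    rw [hookLength_eq_card_Ioo_add_card_Ioo hc]
    push_cast
    ring
  have hne : (μ.hookLength c : ℚ) - 1 ≠ 0 :=
    sub_ne_zero.2 (Nat.one_lt_cast.2 (one_lt_hookLength hc hmax)).ne'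
  refine (mul_eq_left₀ hne).1 ?_
  rw [mul_sum, sum_congr rfl fun γ hγ =>
      hookLength_sub_one_mul_hookWalkProb (mem_corners.1 hγ) c,
    sum_add_distrib, sum_comm (s := μ.corners) (t := Ioo c.2 _),
    sum_comm (s := μ.corners) (t := Ioo c.1 _), harm, hleg, hhook]

theorem cornerWeight_eq_sum_hookWalkProb (hγ : Maximal (· ∈ μ.cells) γ) :
    μ.cornerWeight γ = ∑ c ∈ μ.cells, μ.hookWalkProb c γ := by
  have hrect : Icc 0 γ.1 ×ˢ Icc 0 γ.2 ⊆ μ.cells := fun c hc => by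
    simp only [mem_product, mem_Icc, zero_le, true_and] at hc
    exact μ.isLowerSet (show c ≤ γ from ⟨hc.1, hc.2⟩) hγ.1
  rw [← sum_subset hrect fun c _ hc => hookWalkProb_of_not_le fun hle => hc <| by
      simp [hle.1, hle.2], sum_product, cornerWeight,
    ← sum_Icc_tailWeight (hookCol_self hγ) (one_lt_hookCol hγ) (Nat.zero_le _),
    ← sum_Icc_tailWeight (hookRow_self hγ) (one_lt_hookRow hγ) (Nat.zero_le _), sum_mul_sum]
  rfl

theorem sum_cornerWeight : ∑ γ ∈ μ.corners, μ.cornerWeight γ = #μ.cells := by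
  rw [sum_congr rfl fun γ hγ => cornerWeight_eq_sum_hookWalkProb (mem_corners.1 hγ),
    sum_comm, sum_congr rfl fun c hc => sum_hookWalkProb hc]
  simp

theorem lt_of_mem_erase_of_row_or_col (hγ : Maximal (· ∈ μ.cells) γ) {c : ℕ × ℕ}
    (hc : c ∈ μ.cells.erase γ) (hcr : c.1 = γ.1 ∨ c.2 = γ.2) : c < γ := by
  obtain ⟨hne, hc⟩ := mem_erase.1 hc
  have hc₁ := mem_iff_lt_rowLen.1 ((mem_cells _).1 hc)
  have hc₂ := mem_iff_lt_colLen.1 ((mem_cells _).1 hc)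
  have hγ₁ := rowLen_of_maximal hγ
  have hγ₂ := colLen_of_maximal hγ
  have hne' : c.1 ≠ γ.1 ∨ c.2 ≠ γ.2 := by
    by_contra! h; exact hne (Prod.ext h.1 h.2)
  rcases hcr with h | h
  · rw [h] at hc₁
    exact Prod.lt_iff.2 (Or.inr ⟨h.le, by omega⟩)
  · rw [h] at hc₂
    exact Prod.lt_iff.2 (Or.inl ⟨by omega, h.le⟩)

theorem filter_row_or_col_cells_eraseCorner (hγ : Maximal (· ∈ μ.cells) γ) :
    {c ∈ (μ.eraseCorner γ hγ).cells | c.1 = γ.1 ∨ c.2 = γ.2} =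
      Ico 0 γ.1 ×ˢ {γ.2} ∪ {γ.1} ×ˢ Ico 0 γ.2 := by
  ext c
  constructor
  · intro hc
    obtain ⟨hc, hcr⟩ := mem_filter.1 hc
    have hlt := Prod.lt_iff.1 (lt_of_mem_erase_of_row_or_col hγ hc hcr)
    simp only [mem_union, mem_product, mem_Ico, mem_singleton, Nat.zero_le, true_and]
    omega
  · intro hc
    have hlt : c < γ := by
      simp only [mem_union, mem_product, mem_Ico, mem_singleton, Nat.zero_le, true_and] at hc
      exact Prod.lt_iff.2 (by omega)
    refine mem_filter.2 ⟨mem_erase.2 ⟨hlt.ne, μ.isLowerSet hlt.le hγ.1⟩, ?_⟩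
    simp only [mem_union, mem_product, mem_Ico, mem_singleton] at hc
    omega

theorem hookLength_eq_mul_hookLength_eraseCorner (hγ : Maximal (· ∈ μ.cells) γ) {c : ℕ × ℕ}
    (hc : c ∈ μ.cells.erase γ) :
    (μ.hookLength c : ℚ) =
      (if c.1 = γ.1 ∨ c.2 = γ.2 then (μ.hookLength c : ℚ) / (μ.hookLength c - 1) else 1) *
        (μ.eraseCorner γ hγ).hookLength c := by
  rw [hookLength_eraseCorner hγ hc]
  split_ifs with hcr
  · have hone := one_lt_hookLength_of_lt hγ.1 (lt_of_mem_erase_of_row_or_col hγ hc hcr)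
    rw [Nat.cast_sub hone.le, Nat.cast_one,
      div_mul_cancel₀ _ (sub_ne_zero.2 (Nat.one_lt_cast.2 hone).ne')]
  · rw [one_mul]

theorem prod_hookLength_eq_cornerWeight_mul (hγ : Maximal (· ∈ μ.cells) γ) :
    ∏ c ∈ μ.cells, (μ.hookLength c : ℚ) =
      μ.cornerWeight γ *
        ∏ c ∈ (μ.eraseCorner γ hγ).cells, ((μ.eraseCorner γ hγ).hookLength c : ℚ) := by
  have hdisj : Disjoint (Ico 0 γ.1 ×ˢ {γ.2}) ({γ.1} ×ˢ Ico 0 γ.2) :=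
    disjoint_left.2 fun c h₁ h₂ => by
      simp only [mem_product, mem_Ico, mem_singleton] at h₁ h₂
      omega
  rw [← mul_prod_erase _ _ hγ.1, hookLength_of_maximal hγ, Nat.cast_one, one_mul,
    prod_congr rfl fun c hc => hookLength_eq_mul_hookLength_eraseCorner hγ hc, prod_mul_distrib,
    ← prod_filter, ← cells_eraseCorner hγ, filter_row_or_col_cells_eraseCorner hγ,
    prod_union hdisj, cornerWeight]
  simp only [prod_product, prod_singleton]
  rfl

theorem card_naturalLabeling_mul_prod_hookLength (μ : YoungDiagram) :
    (Nat.card (NaturalLabeling μ.cells) : ℚ) * ∏ c ∈ μ.cells, (μ.hookLength c : ℚ) =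
      (#μ.cells).factorial := by
  induction hn : #μ.cells generalizing μ with
  | zero =>
    rw [card_eq_zero.1 hn, NaturalLabeling.card_empty]
    simp
  | succ n ih =>
    have hterm (γ : ℕ × ℕ) (hγ : γ ∈ μ.corners) :
        (Nat.card (NaturalLabeling (μ.cells.erase γ)) : ℚ) * ∏ c ∈ μ.cells, (μ.hookLength c : ℚ) =
          n.factorial * μ.cornerWeight γ := by
      have hγ := mem_corners.1 hγ
      rw [prod_hookLength_eq_cornerWeight_mul hγ, ← ih (μ.eraseCorner γ hγ) (by
        rw [cells_eraseCorner, card_erase_of_mem hγ.1, hn, Nat.add_sub_cancel])]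
      rw [cells_eraseCorner]
      ring
    calc (Nat.card (NaturalLabeling μ.cells) : ℚ) * ∏ c ∈ μ.cells, (μ.hookLength c : ℚ)
        = ∑ γ ∈ μ.corners, (Nat.card (NaturalLabeling (μ.cells.erase γ)) : ℚ) *
            ∏ c ∈ μ.cells, (μ.hookLength c : ℚ) := by
          rw [NaturalLabeling.card_eq_sum_card_erase (card_pos.1 (by omega)), Nat.cast_sum,
            sum_mul]
          rfl
      _ = ∑ γ ∈ μ.corners, n.factorial * μ.cornerWeight γ := sum_congr rfl hterm
      _ = (n + 1).factorial := by
          rw [← mul_sum, sum_cornerWeight, hn, Nat.factorial_succ]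
          push_cast
          ring

end YoungDiagram

/-- Hook length formula: the number of standard Young tableaux of shape `μ`
(fillings of the diagram by `1, …, r` — here modelled by `Fin r` — strictly
increasing along rows and down columns) equals `r!` divided by the product of all
hook lengths `h_{i,j} = (rowLen i − j) + (colLen j − i) − 1` (0-based indices). -/
theorem stmt_11 (μ : YoungDiagram) :
    (Nat.card {e : {c : ℕ × ℕ // c ∈ μ.cells} ≃ Fin μ.cells.card //
        ∀ c c' : {c : ℕ × ℕ // c ∈ μ.cells},
          ((c.1.1 = c'.1.1 ∧ c.1.2 < c'.1.2) → e c < e c') ∧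
          ((c.1.2 = c'.1.2 ∧ c.1.1 < c'.1.1) → e c < e c')} : ℚ)
      = (μ.cells.card.factorial : ℚ) /
          ∏ c ∈ μ.cells,
            ((((μ.rowLen c.1 - c.2) + (μ.colLen c.2 - c.1) - 1 : ℕ)) : ℚ) := by
  have hprod : ∏ c ∈ μ.cells, (μ.hookLength c : ℚ) ≠ 0 := prod_ne_zero_iff.2 fun c hc =>
    Nat.cast_ne_zero.2 (μ.hookLength_pos hc).ne'
  refine (eq_div_iff hprod).2 ?_
  rw [← μ.card_naturalLabeling_mul_prod_hookLength]
  congr 2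
  exact Nat.card_congr (Equiv.subtypeEquivRight fun e => μ.row_col_lt_iff_strictMono e)
end
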